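/- arXiv:2510.16655 — 2 statements merged into one kernel-verified Lean document; each statement's English description precedes it below -/
import Mathlib

section
/- Consider the vanilla Bregman stochastic proximal point algorithm (BSPPA), i.e. the variance-reduced BSPPA with e_k ≡ 0. Suppose E[g_k | 𝔉_k] ∈ ∂F(x_k) a.s. and there is σ_*² ≥ 0 such that E[D_h(x_k, z_{k+1}) | 𝔉_k] ≤ α_k² σ_*² a.s. for all k. Then for every k ≥ 1: E[F(x̄_k) − F(x_*)] ≤ D_h(x_*, x_0) / Σ_{t=0}^{k−1} α_t + σ_*² · (Σ_{t=0}^{k−1} α_t²) / (Σ_{t=0}^{k−1} α_t), where x̄_k := Σ_{t=0}^{k−1} (α_t / Σ_{s=0}^{k−1} α_s) x_t. -/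
open MeasureTheory ProbabilityTheory Set Finset
open scoped RealInnerProductSpace ENNReal

noncomputable section

abbrev E (d : ℕ) := EuclideanSpace ℝ (Fin d)

/-- Bregman distance of `φ` with gradient field `φ'`. -/
def breg {d : ℕ} (φ : E d → ℝ) (φ' : E d → E d) (x y : E d) : ℝ :=
  φ x - φ y - ⟪φ' y, x - y⟫

/-- Subdifferential of a real-valued convex function. -/
def subdiff {d : ℕ} (f : E d → ℝ) (x : E d) : Set (E d) :=
  {g | ∀ y, f x + ⟪g, y - x⟫ ≤ f y}

/-!
Each step of the method satisfies, pointwise,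
`α_k (f_{i_k}(x_k) - f_{i_k}(x⋆)) ≤ D(x⋆, x_k) - D(x⋆, x_{k+1}) + D(x_k, z_{k+1})`:
the first-order optimality condition of the proximal step gives the Bregman three-point
inequality at `x_{k+1}`, and the subgradient inequality at `x_k` together with the three-point
identity for `x_{k+1}, x_k, z_{k+1}` moves `f_{i_k}` back from `x_{k+1}` to `x_k`.
Since `i_k` is uniform and independent of `x_k`, the expectation of the left side is
`α_k E[F(x_k) - F(x⋆)]`; this is first checked on the events where all `f_i(x_k)` are bounded,
as the individual `f_i(x_k)` need not be integrable. The variance bound controls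
`E[D(x_k, z_{k+1})]`, the sum over `k` telescopes, and Jensen's inequality for the convex `F`
at the weighted average `x̄_k` gives the rate.
-/

open Filter
open scoped Topology

theorem IsMinOn.sub_le_of_convexOn_add {V : Type*} [NormedAddCommGroup V] [NormedSpace ℝ V]
    {S : Set V} {g φ : V → ℝ} {φ' : V →L[ℝ] ℝ} {p w : V}
    (hmin : IsMinOn (fun u => g u + φ u) S p) (hg : ConvexOn ℝ S g)
    (hφ : HasFDerivAt φ φ' p) (hp : p ∈ S) (hw : w ∈ S) :
    g p - φ' (w - p) ≤ g w := by
  have hline : HasDerivAt (fun t : ℝ => -φ (p + t • (w - p))) (-φ' (w - p)) 0 :=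
    (hφ.hasLineDerivAt (w - p)).neg
  suffices -φ' (w - p) ≤ g w - g p by linarith
  refine le_of_tendsto hline.tendsto_slope_zero_right ?_
  filter_upwards [Ioc_mem_nhdsGT (show (0 : ℝ) < 1 by norm_num)] with t ⟨ht0, ht1⟩
  have hseg : p + t • (w - p) = (1 - t) • p + t • w := by module
  have hq : p + t • (w - p) ∈ S := hseg ▸ hg.1 hp hw (by linarith) ht0.le (by ring)
  have hconv : g (p + t • (w - p)) ≤ (1 - t) * g p + t * g w :=
    hseg ▸ hg.2 hp hw (by linarith) ht0.le (by ring)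
  have hle : g p + φ p ≤ g (p + t • (w - p)) + φ (p + t • (w - p)) := hmin hq
  rw [smul_eq_mul, inv_mul_le_iff₀ ht0]
  simp only [zero_add, zero_smul, add_zero]
  linarith

theorem convexOn_sum {ι V : Type*} [AddCommGroup V] [Module ℝ V] {S : Set V}
    (hS : Convex ℝ S) {s : Finset ι} {f : ι → V → ℝ} (hf : ∀ i ∈ s, ConvexOn ℝ S (f i)) :
    ConvexOn ℝ S fun w => ∑ i ∈ s, f i w := by
  simpa only [← Finset.sum_apply] using
    sum_induction f (ConvexOn ℝ S) (fun _ _ => ConvexOn.add) (convexOn_const 0 hS) hf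

theorem integral_sub_le_sum_of_convexOn {Ω κ V : Type*} [MeasurableSpace Ω] {μ : Measure Ω}
    [IsFiniteMeasure μ] [AddCommGroup V] [Module ℝ V] {F : V → ℝ} (hF : ConvexOn ℝ univ F)
    {s : Finset κ} {w : κ → ℝ} (hw₀ : ∀ t ∈ s, 0 ≤ w t) (hw₁ : ∑ t ∈ s, w t = 1)
    {X : κ → Ω → V} (hX : ∀ t ∈ s, Integrable (fun ω => F (X t ω)) μ) {c : V}
    (hc : ∀ ω, F c ≤ F (∑ t ∈ s, w t • X t ω)) :
    ∫ ω, (F (∑ t ∈ s, w t • X t ω) - F c) ∂μ ≤ ∑ t ∈ s, w t * ∫ ω, (F (X t ω) - F c) ∂μ := by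
  have hXc : ∀ t ∈ s, Integrable (fun ω => w t * (F (X t ω) - F c)) μ := fun t ht =>
    ((hX t ht).sub (integrable_const _)).const_mul _
  have hjensen : ∀ ω, F (∑ t ∈ s, w t • X t ω) - F c ≤ ∑ t ∈ s, w t * (F (X t ω) - F c) := by
    intro ω
    have := hF.map_sum_le hw₀ hw₁ fun t _ => mem_univ (X t ω)
    simp only [smul_eq_mul] at this
    simp only [mul_sub, sum_sub_distrib, ← sum_mul, hw₁, one_mul]
    linarith
  calc ∫ ω, (F (∑ t ∈ s, w t • X t ω) - F c) ∂μ
      ≤ ∫ ω, ∑ t ∈ s, w t * (F (X t ω) - F c) ∂μ :=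
        integral_mono_of_nonneg (Eventually.of_forall fun ω => sub_nonneg.2 (hc ω))
          (integrable_finsetSum _ hXc) (Eventually.of_forall hjensen)
    _ = ∑ t ∈ s, w t * ∫ ω, (F (X t ω) - F c) ∂μ := by
        rw [integral_finsetSum _ hXc]
        exact sum_congr rfl fun t _ => integral_const_mul _ _

theorem integral_le_of_forall_setIntegral_le {Ω : Type*} [MeasurableSpace Ω] {μ : Measure Ω}
    {s : ℕ → Set Ω} (hs : ∀ m, MeasurableSet (s m)) (hmono : Monotone s)
    (hcover : ⋃ m, s m = univ) {a b : Ω → ℝ} (ha : Integrable a μ) (hb : Integrable b μ)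
    (hle : ∀ m, ∫ ω in s m, a ω ∂μ ≤ ∫ ω in s m, b ω ∂μ) :
    ∫ ω, a ω ∂μ ≤ ∫ ω, b ω ∂μ := by
  have hlim : ∀ {c : Ω → ℝ}, Integrable c μ →
      Tendsto (fun m => ∫ ω in s m, c ω ∂μ) atTop (𝓝 (∫ ω, c ω ∂μ)) := fun hc => by
    simpa [hcover] using tendsto_setIntegral_of_monotone hs hmono hc.integrableOn
  exact le_of_tendsto_of_tendsto' (hlim ha) (hlim hb) hle

theorem integral_le_of_ae_condExp_le {Ω : Type*} {m mΩ : MeasurableSpace Ω} {μ : Measure Ω}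
    [IsProbabilityMeasure μ] (hm : m ≤ mΩ) {f : Ω → ℝ} {c : ℝ}
    (hle : ∀ᵐ ω ∂μ, μ[f|m] ω ≤ c) : ∫ ω, f ω ∂μ ≤ c := by
  rw [← integral_condExp hm]
  simpa using integral_mono_ae integrable_condExp (integrable_const c) hle

theorem sum_range_le_of_le_sub_add {a c D : ℕ → ℝ} (hstep : ∀ t, a t ≤ D t - D (t + 1) + c t)
    {K : ℕ} (hD : 0 ≤ D K) : ∑ t ∈ range K, a t ≤ D 0 + ∑ t ∈ range K, c t := by
  have htele : ∑ t ∈ range K, (D t - D (t + 1) + c t) = D 0 - D K + ∑ t ∈ range K, c t := by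
    rw [sum_add_distrib, sum_range_sub']
  linarith [sum_le_sum fun t (_ : t ∈ range K) => hstep t]

section Bregman

variable {d : ℕ} {h : E d → ℝ} {h' : E d → E d}

theorem breg_three_point (x y z : E d) :
    breg h h' x z = breg h h' x y + breg h h' y z + ⟪h' y - h' z, x - y⟫ := by
  simp only [breg, inner_sub_left, inner_sub_right]
  ring

theorem breg_nonneg {s : Set (E d)} {x y : E d} (hconv : ConvexOn ℝ s h)
    (hgrad : HasGradientAt h (h' y) y) (hy : y ∈ s) (hx : x ∈ s) : 0 ≤ breg h h' x y := by
  have hmin : IsMinOn (fun u => h u + -h u) s y := fun u _ => by simp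
  have := hmin.sub_le_of_convexOn_add hconv hgrad.hasFDerivAt.neg hy hx
  simp only [neg_apply, InnerProductSpace.toDual_apply_apply, sub_neg_eq_add] at this
  simp only [breg]
  linarith

theorem breg_prox_le {S : Set (E d)} {f : E d → ℝ} {α : ℝ} {y p w : E d}
    (hf : ConvexOn ℝ S f) (hα : 0 < α) (hgrad : HasGradientAt h (h' p) p) (hp : p ∈ S)
    (hw : w ∈ S) (hmin : IsMinOn (fun u => f u + α⁻¹ * breg h h' u y) S p) :
    α * f p + breg h h' p y + breg h h' w p ≤ α * f w + breg h h' w y := by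
  have hlin : HasFDerivAt (fun u => ⟪h' y, u - y⟫) (innerSL ℝ (h' y)) p := by
    have := ((innerSL ℝ (h' y)).hasFDerivAt (x := p)).sub_const ⟪h' y, y⟫
    simpa only [innerSL_apply_apply, ← inner_sub_right] using this
  have hbreg := ((hgrad.hasFDerivAt.sub_const (h y)).sub hlin).const_mul α⁻¹
  have hfo := hmin.sub_le_of_convexOn_add hf hbreg hp hw
  simp only [smul_apply, sub_apply,
    InnerProductSpace.toDual_apply_apply, innerSL_apply_apply, ← inner_sub_left,
    smul_eq_mul] at hfo
  have h3 := breg_three_point (h := h) (h' := h') w p y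
  have hscaled : α * f p - ⟪h' p - h' y, w - p⟫ ≤ α * f w := by
    have := mul_le_mul_of_nonneg_left hfo hα.le
    rwa [mul_sub, ← mul_assoc, mul_inv_cancel₀ hα.ne', one_mul] at this
  linarith

theorem breg_prox_step_le {C : Set (E d)} (hC : Convex ℝ C) (hconv : ConvexOn ℝ C h)
    (hgrad : ∀ u ∈ interior C, HasGradientAt h (h' u) u) {f : E d → ℝ}
    (hf : ConvexOn ℝ univ f) {α : ℝ} (hα : 0 < α) {x p z g w : E d} (hp : p ∈ interior C)
    (hz : z ∈ interior C) (hw : w ∈ C) (hg : g ∈ subdiff f x) (hzeq : h' z = h' x - α • g)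
    (hmin : IsMinOn (fun u => f u + α⁻¹ * breg h h' u x) (closure C) p) :
    α * (f x - f w) ≤ breg h h' w x - breg h h' w p + breg h h' x z := by
  have hprox := breg_prox_le (hf.subset (subset_univ _) hC.closure) hα (hgrad p hp)
    (subset_closure (interior_subset hp)) (subset_closure hw) hmin
  have h3 : breg h h' p z = breg h h' p x + breg h h' x z + α * ⟪g, p - x⟫ := by
    rw [breg_three_point p x z, hzeq, sub_sub_cancel, real_inner_smul_left]
  have hpz : 0 ≤ breg h h' p z :=
    breg_nonneg hconv (hgrad z hz) (interior_subset hz) (interior_subset hp)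
  have hsub : α * (f x + ⟪g, p - x⟫) ≤ α * f p := mul_le_mul_of_nonneg_left (hg p) hα.le
  linarith

end Bregman

section SampledIndex

variable {Ω ι : Type*} [Fintype ι]

theorem comp_index_eq_sum_indicator (I : Ω → ι) (Y : ι → Ω → ℝ) :
    (fun ω => Y (I ω) ω) = fun ω => ∑ i, {ω | I ω = i}.indicator (Y i) ω := by
  funext ω
  rw [sum_eq_single (I ω), indicator_of_mem (by rfl)]
  · exact fun i _ hi => indicator_of_notMem (s := {ω | I ω = i}) (Ne.symm hi) _
  · exact fun h => absurd (Finset.mem_univ _) h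

variable {𝓧 : Type*} {mΩ : MeasurableSpace Ω} {μ : Measure Ω}
  [mι : MeasurableSpace ι] [MeasurableSingletonClass ι] [m𝓧 : MeasurableSpace 𝓧]
  {I : Ω → ι} {X : Ω → 𝓧}

theorem Integrable.comp_index (hI : Measurable I) {Y : ι → Ω → ℝ}
    (hY : ∀ i, Integrable (Y i) μ) : Integrable (fun ω => Y (I ω) ω) μ := by
  rw [comp_index_eq_sum_indicator]
  exact integrable_finsetSum _ fun i _ => (hY i).indicator (hI (measurableSet_singleton i))

theorem integral_comp_index_eq_sum (hI : Measurable I) (hX : Measurable X)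
    (hindep : Indep (mι.comap I) (m𝓧.comap X) μ) {g : ι → 𝓧 → ℝ}
    (hg : ∀ i, Measurable (g i)) (hgX : ∀ i, Integrable (fun ω => g i (X ω)) μ) :
    ∫ ω, g (I ω) (X ω) ∂μ = ∑ i, μ.real {ω | I ω = i} * ∫ ω, g i (X ω) ∂μ := by
  have hfib : ∀ i, MeasurableSet[mι.comap I] {ω | I ω = i} :=
    fun i => ⟨{i}, measurableSet_singleton i, rfl⟩
  rw [comp_index_eq_sum_indicator I fun i ω => g i (X ω), integral_finsetSum _ fun i _ =>
    (hgX i).indicator (hI.comap_le _ (hfib i))]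
  refine sum_congr rfl fun i _ => ?_
  rw [integral_indicator (hI.comap_le _ (hfib i))]
  exact hindep.setIntegral_eq_mul hI.comap_le hX.aemeasurable (hfib i)
    (hg i).aestronglyMeasurable

theorem integral_avg_le_of_comp_index_le [IsFiniteMeasure μ] (hI : Measurable I)
    (hX : Measurable X) (hindep : Indep (mι.comap I) (m𝓧.comap X) μ)
    (hunif : ∀ i, μ {ω | I ω = i} = (Fintype.card ι : ℝ≥0∞)⁻¹) {f : ι → 𝓧 → ℝ}
    (hf : ∀ i, Measurable (f i))
    (hfX : Integrable (fun ω => (∑ i, f i (X ω)) / Fintype.card ι) μ)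
    {R : Ω → ℝ} (hR : Integrable R μ) (hle : ∀ ω, f (I ω) (X ω) ≤ R ω) :
    ∫ ω, (∑ i, f i (X ω)) / Fintype.card ι ∂μ ≤ ∫ ω, R ω ∂μ := by
  set S : ℕ → Set 𝓧 := fun m => {w | ∑ j, |f j w| ≤ m}
  have hS : ∀ m, MeasurableSet (S m) := fun m =>
    measurableSet_le (Finset.measurable_sum _ fun j _ => (hf j).abs) measurable_const
  have hSmono : Monotone S := fun m m' hm =>
    ofPred_subset_ofPred.2 fun w hw => hw.trans (Nat.cast_le.2 hm)
  refine integral_le_of_forall_setIntegral_le (s := fun m => X ⁻¹' S m) (fun m => hX (hS m))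
    (fun m m' hm => preimage_mono (hSmono hm))
    (eq_univ_of_forall fun ω => mem_iUnion.2 (exists_nat_ge (∑ j, |f j (X ω)|))) hfX hR
    fun m => ?_
  set g : ι → 𝓧 → ℝ := fun i => (S m).indicator (f i)
  have hg : ∀ i, Measurable (g i) := fun i => (hf i).indicator (hS m)
  have hgX : ∀ i, Integrable (fun ω => g i (X ω)) μ := fun i => by
    refine Integrable.of_bound ((hg i).comp hX).aestronglyMeasurable m
      (Eventually.of_forall fun ω => ?_)
    have hsum : |f i (X ω)| ≤ ∑ j, |f j (X ω)| :=
      single_le_sum (f := fun j => |f j (X ω)|) (fun j _ => abs_nonneg _)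
        (Finset.mem_univ i)
    by_cases hω : X ω ∈ S m
    · simpa [g, indicator_of_mem hω] using hsum.trans hω
    · simp [g, indicator_of_notMem hω]
  calc ∫ ω in X ⁻¹' S m, (∑ i, f i (X ω)) / Fintype.card ι ∂μ
      = ∫ ω, (∑ i, g i (X ω)) / Fintype.card ι ∂μ := by
        rw [← integral_indicator (hX (hS m))]
        congr with ω
        by_cases hω : X ω ∈ S m
        · simp [g, indicator_of_mem hω, indicator_of_mem (show ω ∈ X ⁻¹' S m from hω)]
        · simp [g, indicator_of_notMem hω, indicator_of_notMem (show ω ∉ X ⁻¹' S m from hω)]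
    _ = ∑ i, μ.real {ω | I ω = i} * ∫ ω, g i (X ω) ∂μ := by
        simp only [measureReal_def, hunif, ENNReal.toReal_inv, ENNReal.toReal_natCast]
        rw [integral_div, integral_finsetSum _ fun i _ => hgX i, sum_div]
        simp only [div_eq_inv_mul]
    _ = ∫ ω, g (I ω) (X ω) ∂μ := (integral_comp_index_eq_sum hI hX hindep hg hgX).symm
    _ ≤ ∫ ω in X ⁻¹' S m, R ω ∂μ := by
        rw [← integral_indicator (hX (hS m))]
        refine integral_mono (Integrable.comp_index hI hgX) (hR.indicator (hX (hS m))) fun ω => ?_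
        by_cases hω : X ω ∈ S m
        · simpa [g, indicator_of_mem hω, indicator_of_mem (show ω ∈ X ⁻¹' S m from hω)]
            using hle ω
        · simp [g, indicator_of_notMem hω, indicator_of_notMem (show ω ∉ X ⁻¹' S m from hω)]

end SampledIndex

theorem integral_bsppa_step_le {d n : ℕ} {C : Set (E d)} (hC : Convex ℝ C) {h : E d → ℝ}
    {h' : E d → E d} (hconv : ConvexOn ℝ C h)
    (hgrad : ∀ w ∈ interior C, HasGradientAt h (h' w) w) {f : Fin n → E d → ℝ}
    (hfconv : ∀ i, ConvexOn ℝ univ (f i)) {F : E d → ℝ} (hForm : F = fun w => (∑ i, f i w) / n)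
    {xstar : E d} (hxstarC : xstar ∈ C) {Ω : Type*} {m mΩ : MeasurableSpace Ω} {μ : Measure Ω}
    [IsProbabilityMeasure μ] (hm : m ≤ mΩ) {I : Ω → Fin n} (hI : Measurable I)
    (hunif : ∀ j, μ {ω | I ω = j} = (n : ℝ≥0∞)⁻¹) (hindep : Indep (MeasurableSpace.comap I ⊤) m μ)
    {α σ2 : ℝ} (hα : 0 < α) {x xp z g : Ω → E d} (hx : Measurable[m] x)
    (hxpint : ∀ ω, xp ω ∈ interior C) (hzint : ∀ ω, z ω ∈ interior C)
    (hmin : ∀ ω, IsMinOn (fun w => f (I ω) w + α⁻¹ * breg h h' w (x ω)) (closure C) (xp ω))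
    (hg : ∀ ω, g ω ∈ subdiff (f (I ω)) (x ω)) (hz : ∀ ω, h' (z ω) = h' (x ω) - α • g ω)
    (hintD : Integrable (fun ω => breg h h' xstar (x ω)) μ)
    (hintDp : Integrable (fun ω => breg h h' xstar (xp ω)) μ)
    (hintDz : Integrable (fun ω => breg h h' (x ω) (z ω)) μ)
    (hintF : Integrable (fun ω => F (x ω)) μ)
    (hvar : ∀ᵐ ω ∂μ, μ[fun ω' => breg h h' (x ω') (z ω')|m] ω ≤ α ^ 2 * σ2) :
    α * ∫ ω, (F (x ω) - F xstar) ∂μ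
      ≤ ∫ ω, breg h h' xstar (x ω) ∂μ - ∫ ω, breg h h' xstar (xp ω) ∂μ + α ^ 2 * σ2 := by
  have hfmeas : ∀ i, Measurable (f i) := fun i =>
    (continuousOn_univ.1 ((hfconv i).continuousOn isOpen_univ)).measurable
  have havg : ∀ w, (∑ i, α * (f i w - f i xstar)) / n = α * (F w - F xstar) := fun w => by
    rw [hForm, ← mul_sum, sum_sub_distrib]; ring
  have hsample := integral_avg_le_of_comp_index_le (μ := μ) (I := I) (X := x)
    (f := fun i w => α * (f i w - f i xstar))
    (R := fun ω => breg h h' xstar (x ω) - breg h h' xstar (xp ω) + breg h h' (x ω) (z ω))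
    hI (hx.mono hm le_rfl) (indep_of_indep_of_le_right hindep hx.comap_le)
    (by simpa using hunif) (fun i => by fun_prop)
    (by simp only [Fintype.card_fin, havg]; exact (hintF.sub (integrable_const _)).const_mul _)
    ((hintD.sub hintDp).add hintDz)
    fun ω => breg_prox_step_le hC hconv hgrad (hfconv _) hα (hxpint ω) (hzint ω) hxstarC
      (hg ω) (hz ω) (hmin ω)
  simp only [Fintype.card_fin, havg, integral_const_mul] at hsample
  rw [integral_add (f := fun ω => breg h h' xstar (x ω) - breg h h' xstar (xp ω))
    (hintD.sub hintDp) hintDz, integral_sub hintD hintDp] at hsample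
  linarith [integral_le_of_ae_condExp_le hm hvar]

theorem bsppa_vanilla_sublinear_rate_general
    (d n : ℕ)
    (C : Set (E d)) (hC : Convex ℝ C)
    (h : E d → ℝ) (h' : E d → E d)
    (hstrict : StrictConvexOn ℝ C h)
    (hgrad : ∀ w ∈ interior C, HasGradientAt h (h' w) w)
    (f : Fin n → E d → ℝ)
    (hfconv : ∀ i, ConvexOn ℝ univ (f i))
    (F : E d → ℝ) (hForm : F = fun w => (∑ i, f i w) / n)
    (xstar : E d) (hxstarC : xstar ∈ C)
    (hxstarmin : ∀ w ∈ closure C, F xstar ≤ F w)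
    -- probability setup
    {Ω : Type} [mΩ : MeasurableSpace Ω] (μ : Measure Ω) [IsProbabilityMeasure μ]
    (𝔉 : ℕ → MeasurableSpace Ω) (h𝔉le : ∀ k, 𝔉 k ≤ mΩ)
    (ι : ℕ → Ω → Fin n)
    (hιunif : ∀ k j, μ {ω | ι k ω = j} = (n : ℝ≥0∞)⁻¹)
    (hιindep : ∀ k, Indep (MeasurableSpace.comap (ι k) ⊤) (𝔉 k) μ)
    (hιmeas : ∀ k, Measurable[𝔉 (k + 1)] (ι k))
    -- the vanilla BSPPA algorithm (e ≡ 0)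
    (α : ℕ → ℝ) (hα : ∀ k, 0 < α k)
    (x z gx : ℕ → Ω → E d)
    (x0 : E d) (hx0eq : ∀ ω, x 0 ω = x0)
    (hxint : ∀ k ω, x k ω ∈ interior C)
    (hxmeas : ∀ k, Measurable[𝔉 k] (x k))
    (halg : ∀ k ω, IsMinOn (fun w => f (ι k ω) w
        + (α k)⁻¹ * breg h h' w (x k ω)) (closure C) (x (k + 1) ω))
    -- subgradients and virtual explicit iterate
    (hgx : ∀ k ω, gx k ω ∈ subdiff (f (ι k ω)) (x k ω))
    (hzint : ∀ k ω, z (k + 1) ω ∈ interior C)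
    (hz : ∀ k ω, h' (z (k + 1) ω) = h' (x k ω) - α k • gx k ω)
    -- integrability
    (hintD : ∀ k, Integrable (fun ω => breg h h' xstar (x k ω)) μ)
    (hintDz : ∀ k, Integrable (fun ω => breg h h' (x k ω) (z (k + 1) ω)) μ)
    (hintF : ∀ k, Integrable (fun ω => F (x k ω)) μ)
    -- bounded variance: E[D_h(x_k, z_{k+1}) | 𝔉_k] ≤ α_k² σ∗²
    (σstar2 : ℝ)
    (hBii : ∀ k, ∀ᵐ ω ∂μ,
      condExp (𝔉 k) μ (fun ω' => breg h h' (x k ω') (z (k + 1) ω')) ω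
        ≤ α k ^ 2 * σstar2) :
    ∀ k, 1 ≤ k →
      (∫ ω, (F ((∑ t ∈ Finset.range k,
              (α t / (∑ s ∈ Finset.range k, α s)) • x t ω)) - F xstar) ∂μ)
        ≤ breg h h' xstar x0 / (∑ t ∈ Finset.range k, α t)
          + σstar2 * ((∑ t ∈ Finset.range k, α t ^ 2) / (∑ t ∈ Finset.range k, α t)) := by
  have hconvh := hstrict.convexOn
  have hFconv : ConvexOn ℝ univ F := by
    rw [hForm]
    simpa only [smul_eq_mul, div_eq_inv_mul] using
      (convexOn_sum convex_univ fun i _ => hfconv i).smul (inv_nonneg.2 n.cast_nonneg)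
  have step : ∀ t, α t * ∫ ω, (F (x t ω) - F xstar) ∂μ
      ≤ ∫ ω, breg h h' xstar (x t ω) ∂μ - ∫ ω, breg h h' xstar (x (t + 1) ω) ∂μ
        + α t ^ 2 * σstar2 := fun t =>
    integral_bsppa_step_le hC hconvh hgrad hfconv hForm hxstarC (h𝔉le t)
      ((hιmeas t).mono (h𝔉le _) le_rfl) (hιunif t) (hιindep t) (hα t) (hxmeas t)
      (hxint (t + 1)) (hzint t) (halg t) (hgx t) (hz t) (hintD t) (hintD (t + 1)) (hintDz t)
      (hintF t) (hBii t)
  intro k hk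
  set S := ∑ t ∈ range k, α t
  have hS : 0 < S := sum_pos (fun t _ => hα t) (nonempty_range_iff.2 (by omega))
  have hw₀ : ∀ t ∈ range k, 0 ≤ α t / S := fun t _ => div_nonneg (hα t).le hS.le
  have hw₁ : ∑ t ∈ range k, α t / S = 1 := by rw [← sum_div, div_self hS.ne']
  have htele : ∑ t ∈ range k, α t * ∫ ω, (F (x t ω) - F xstar) ∂μ
      ≤ breg h h' xstar x0 + ∑ t ∈ range k, α t ^ 2 * σstar2 := by
    simpa [hx0eq] using sum_range_le_of_le_sub_add step (integral_nonneg fun ω =>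
      breg_nonneg hconvh (hgrad _ (hxint k ω)) (interior_subset (hxint k ω)) hxstarC)
  have hxbar : ∀ ω, ∑ t ∈ range k, (α t / S) • x t ω ∈ closure C := fun ω =>
    hC.closure.sum_mem hw₀ hw₁ fun t _ => subset_closure (interior_subset (hxint t ω))
  calc _ ≤ ∑ t ∈ range k, α t / S * ∫ ω, (F (x t ω) - F xstar) ∂μ :=
        integral_sub_le_sum_of_convexOn hFconv hw₀ hw₁ (fun t _ => hintF t)
          fun ω => hxstarmin _ (hxbar ω)
    _ = (∑ t ∈ range k, α t * ∫ ω, (F (x t ω) - F xstar) ∂μ) / S := by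
        rw [sum_div]; exact sum_congr rfl fun t _ => div_mul_eq_mul_div _ _ _
    _ ≤ (breg h h' xstar x0 + ∑ t ∈ range k, α t ^ 2 * σstar2) / S := by gcongr
    _ = _ := by rw [← sum_mul]; ring

/-- Theorem: sublinear rate for vanilla BSPPA, convex case. -/
theorem bsppa_vanilla_sublinear_rate
    (d n : ℕ) (hn : 0 < n)
    (C : Set (E d)) (hC : Convex ℝ C) (hCne : (interior C).Nonempty)
    (h : E d → ℝ) (h' : E d → E d)
    (hstrict : StrictConvexOn ℝ C h) (hreg : ContDiffOn ℝ 2 h (interior C))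
    (hgrad : ∀ w ∈ interior C, HasGradientAt h (h' w) w)
    (f : Fin n → E d → ℝ)
    (hfconv : ∀ i, ConvexOn ℝ univ (f i)) (hflsc : ∀ i, LowerSemicontinuous (f i))
    (F : E d → ℝ) (hForm : F = fun w => (∑ i, f i w) / n)
    (xstar : E d) (hxstarC : xstar ∈ C)
    (hxstarmin : ∀ w ∈ closure C, F xstar ≤ F w)
    -- probability setup
    {Ω : Type} [mΩ : MeasurableSpace Ω] (μ : Measure Ω) [IsProbabilityMeasure μ]
    (𝔉 : ℕ → MeasurableSpace Ω) (h𝔉mono : Monotone 𝔉) (h𝔉le : ∀ k, 𝔉 k ≤ mΩ)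
    (ι : ℕ → Ω → Fin n)
    (hιunif : ∀ k j, μ {ω | ι k ω = j} = (n : ℝ≥0∞)⁻¹)
    (hιindep : ∀ k, Indep (MeasurableSpace.comap (ι k) ⊤) (𝔉 k) μ)
    (hιiid : ∀ k l, k ≠ l → IndepFun (ι k) (ι l) μ)
    (hιmeas : ∀ k, Measurable[𝔉 (k + 1)] (ι k))
    -- the vanilla BSPPA algorithm (e ≡ 0)
    (α : ℕ → ℝ) (hα : ∀ k, 0 < α k)
    (x z gx : ℕ → Ω → E d)
    (x0 : E d) (hx0 : x0 ∈ interior C) (hx0eq : ∀ ω, x 0 ω = x0)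
    (hxint : ∀ k ω, x k ω ∈ interior C)
    (hxmeas : ∀ k, Measurable[𝔉 k] (x k))
    (halg : ∀ k ω, IsMinOn (fun w => f (ι k ω) w
        + (α k)⁻¹ * breg h h' w (x k ω)) (closure C) (x (k + 1) ω))
    (halguniq : ∀ k ω, ∀ w ∈ closure C,
      IsMinOn (fun w' => f (ι k ω) w'
        + (α k)⁻¹ * breg h h' w' (x k ω)) (closure C) w → w = x (k + 1) ω)
    -- subgradients and virtual explicit iterate
    (hgx : ∀ k ω, gx k ω ∈ subdiff (f (ι k ω)) (x k ω))
    (hzint : ∀ k ω, z (k + 1) ω ∈ interior C)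
    (hz : ∀ k ω, h' (z (k + 1) ω) = h' (x k ω) - α k • gx k ω)
    -- integrability
    (hintg : ∀ k, Integrable (gx k) μ)
    (hintD : ∀ k, Integrable (fun ω => breg h h' xstar (x k ω)) μ)
    (hintDz : ∀ k, Integrable (fun ω => breg h h' (x k ω) (z (k + 1) ω)) μ)
    (hintF : ∀ k, Integrable (fun ω => F (x k ω)) μ)
    -- unbiasedness of the subgradient estimator
    (hBi2 : ∀ k, ∀ᵐ ω ∂μ, condExp (𝔉 k) μ (gx k) ω ∈ subdiff F (x k ω))
    -- bounded variance: E[D_h(x_k, z_{k+1}) | 𝔉_k] ≤ α_k² σ∗²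
    (σstar2 : ℝ) (hσstar2 : 0 ≤ σstar2)
    (hBii : ∀ k, ∀ᵐ ω ∂μ,
      condExp (𝔉 k) μ (fun ω' => breg h h' (x k ω') (z (k + 1) ω')) ω
        ≤ α k ^ 2 * σstar2) :
    ∀ k, 1 ≤ k →
      (∫ ω, (F ((∑ t ∈ Finset.range k,
              (α t / (∑ s ∈ Finset.range k, α s)) • x t ω)) - F xstar) ∂μ)
        ≤ breg h h' xstar x0 / (∑ t ∈ Finset.range k, α t)
          + σstar2 * ((∑ t ∈ Finset.range k, α t ^ 2) / (∑ t ∈ Finset.range k, α t)) :=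
  bsppa_vanilla_sublinear_rate_general d n C hC h h' hstrict hgrad f hfconv F hForm xstar hxstarC
    hxstarmin (mΩ := mΩ) μ 𝔉 h𝔉le ι hιunif hιindep hιmeas α hα x z gx x0 hx0eq hxint hxmeas halg hgx
    hzint hz hintD hintDz hintF σstar2 hBii
end
end

section
/- Averaging lemma for Bregman mirror steps: let x ∈ int C and g_1, g_2 ∈ ℝ^d, and suppose the points x_1^+, x_2^+, x^+ ∈ int C are (uniquely) determined by ∇h(x_1^+) = ∇h(x) − g_1, ∇h(x_2^+) = ∇h(x) − g_2, ∇h(x^+) = ∇h(x) − (g_1 + g_2)/2. Then D_h(x, x^+) ≤ (1/2)[ D_h(x, x_1^+) + D_h(x, x_2^+) ] = (1/2)[ D_{h*}(∇h(x_1^+), ∇h(x)) + D_{h*}(∇h(x_2^+), ∇h(x)) ]. -/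
/-!
Under the mirror map the three steps become `∇h(x⁺) = (∇h(x₁⁺) + ∇h(x₂⁺)) / 2` in the dual space,
and `D_h(x, y) = D_{h*}(∇h(y), ∇h(x))`. A Bregman distance `D_φ(·, v)` is `φ` minus an affine
function, hence convex wherever `φ` is; applied to `φ = h*` at the midpoint this is the inequality.
-/

open Set
open scoped RealInnerProductSpace

noncomputable section

theorem breg_eq_breg_conj {d : ℕ} {φ ψ : E d → ℝ} {φ' ψ' : E d → E d} {x y : E d}
    (hfen_x : ψ (φ' x) = ⟪φ' x, x⟫ - φ x) (hfen_y : ψ (φ' y) = ⟪φ' y, y⟫ - φ y)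
    (hinv : ψ' (φ' x) = x) :
    breg φ φ' x y = breg ψ ψ' (φ' y) (φ' x) := by
  simp only [breg, hfen_x, hfen_y, hinv, inner_sub_right,
    real_inner_comm x (φ' y), real_inner_comm x (φ' x)]
  ring

theorem convexOn_breg_left {d : ℕ} {S : Set (E d)} {φ : E d → ℝ} (φ' : E d → E d)
    (hφ : ConvexOn ℝ S φ) (v : E d) : ConvexOn ℝ S (fun u ↦ breg φ φ' u v) := by
  refine ⟨hφ.1, fun u hu w hw a b ha hb hab ↦ ?_⟩
  obtain rfl : b = 1 - a := eq_sub_of_add_eq' hab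
  have hφuw := hφ.2 hu hw ha hb hab
  have hinner : ⟪φ' v, a • u + (1 - a) • w - v⟫
      = a * ⟪φ' v, u - v⟫ + (1 - a) * ⟪φ' v, w - v⟫ := by
    rw [← real_inner_smul_right, ← real_inner_smul_right, ← inner_add_right]
    congr 1
    module
  simp only [breg, smul_eq_mul] at hφuw ⊢
  rw [hinner]
  linarith

theorem bregman_mirror_step_averaging_general
    (d : ℕ)
    (C : Set (E d))
    -- h is a Legendre kernel, twice continuously differentiable on int C
    (h : E d → ℝ) (h' : E d → E d)
    -- the conjugate h* with gradient hs' on Sstar = dom h*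
    (hs : E d → ℝ) (hs' : E d → E d) (Sstar : Set (E d))
    (hsconv : ConvexOn ℝ Sstar hs)
    (hfen : ∀ w ∈ interior C, hs (h' w) = ⟪h' w, w⟫ - h w)
    (hmap : ∀ w ∈ interior C, h' w ∈ interior Sstar)
    (hinv : ∀ w ∈ interior C, hs' (h' w) = w)
    -- the three mirror steps
    (x : E d) (hx : x ∈ interior C) (g1 g2 : E d)
    (x1 x2 xp : E d)
    (hx1 : x1 ∈ interior C) (hx2 : x2 ∈ interior C) (hxp : xp ∈ interior C)
    (hx1eq : h' x1 = h' x - g1) (hx2eq : h' x2 = h' x - g2)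
    (hxpeq : h' xp = h' x - (2 : ℝ)⁻¹ • (g1 + g2)) :
    breg h h' x xp ≤ (1 / 2) * (breg h h' x x1 + breg h h' x x2) ∧
    (1 / 2) * (breg h h' x x1 + breg h h' x x2)
      = (1 / 2) * (breg hs hs' (h' x1) (h' x) + breg hs hs' (h' x2) (h' x)) := by
  have dual : ∀ y ∈ interior C, breg h h' x y = breg hs hs' (h' y) (h' x) := fun y hy ↦
    breg_eq_breg_conj (hfen x hx) (hfen y hy) (hinv x hx)
  have hmid : h' xp = (2 : ℝ)⁻¹ • h' x1 + (2 : ℝ)⁻¹ • h' x2 := by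
    rw [hxpeq, hx1eq, hx2eq]; module
  refine ⟨?_, by rw [dual x1 hx1, dual x2 hx2]⟩
  calc breg h h' x xp = breg hs hs' ((2 : ℝ)⁻¹ • h' x1 + (2 : ℝ)⁻¹ • h' x2) (h' x) := by
        rw [dual xp hxp, hmid]
    _ ≤ (2 : ℝ)⁻¹ * breg hs hs' (h' x1) (h' x) + (2 : ℝ)⁻¹ * breg hs hs' (h' x2) (h' x) :=
        (convexOn_breg_left hs' hsconv (h' x)).2 (interior_subset (hmap x1 hx1))
          (interior_subset (hmap x2 hx2)) (by norm_num) (by norm_num) (by norm_num)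
    _ = (1 / 2) * (breg h h' x x1 + breg h h' x x2) := by
        rw [dual x1 hx1, dual x2 hx2]; ring

/-- Lemma: averaging of two Bregman mirror steps. -/
theorem bregman_mirror_step_averaging
    (d : ℕ)
    (C : Set (E d)) (hC : Convex ℝ C) (hCne : (interior C).Nonempty)
    -- h is a Legendre kernel, twice continuously differentiable on int C
    (h : E d → ℝ) (h' : E d → E d)
    (hstrict : StrictConvexOn ℝ C h) (hlsc : LowerSemicontinuous h)
    (hreg : ContDiffOn ℝ 2 h (interior C))
    (hgrad : ∀ w ∈ interior C, HasGradientAt h (h' w) w)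
    -- the conjugate h* with gradient hs' on Sstar = dom h*
    (hs : E d → ℝ) (hs' : E d → E d) (Sstar : Set (E d))
    (hsconv : ConvexOn ℝ Sstar hs)
    (hsgrad : ∀ u ∈ interior Sstar, HasGradientAt hs (hs' u) u)
    (hyoung : ∀ u w, ⟪u, w⟫ ≤ hs u + h w)
    (hfen : ∀ w ∈ interior C, hs (h' w) = ⟪h' w, w⟫ - h w)
    (hmap : ∀ w ∈ interior C, h' w ∈ interior Sstar)
    (hinv : ∀ w ∈ interior C, hs' (h' w) = w)
    (hmap' : ∀ u ∈ interior Sstar, hs' u ∈ interior C)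
    (hinv' : ∀ u ∈ interior Sstar, h' (hs' u) = u)
    -- the three mirror steps
    (x : E d) (hx : x ∈ interior C) (g1 g2 : E d)
    (x1 x2 xp : E d)
    (hx1 : x1 ∈ interior C) (hx2 : x2 ∈ interior C) (hxp : xp ∈ interior C)
    (hx1eq : h' x1 = h' x - g1) (hx2eq : h' x2 = h' x - g2)
    (hxpeq : h' xp = h' x - (2 : ℝ)⁻¹ • (g1 + g2)) :
    breg h h' x xp ≤ (1 / 2) * (breg h h' x x1 + breg h h' x x2) ∧
    (1 / 2) * (breg h h' x x1 + breg h h' x x2)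
      = (1 / 2) * (breg hs hs' (h' x1) (h' x) + breg hs hs' (h' x2) (h' x)) :=
  bregman_mirror_step_averaging_general d C h h' hs hs' Sstar hsconv hfen hmap hinv x hx g1 g2 x1 x2
    xp hx1 hx2 hxp hx1eq hx2eq hxpeq
end
end
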